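/- Under Assumption 2 and one DGT step with stepsize α > 0, the iterates satisfy ‖y_{k+1} − 𝒥y_{k+1}‖ ≤ (ρ + αL₂L₃(1 + L₃))‖y_k − 𝒥y_k‖ + αL₁L₂(1 + L₃)²‖x_k − x*‖ + (αL₁L₂(1 + L₃) + L₂‖A − I‖)‖σ_k − 𝒥σ_k‖, where ρ := ‖A − J‖ and ‖A − I‖ is the ℓ₂-operator norm. -/

import Mathlib

noncomputable section
open scoped BigOperators

/-- The stacked decision space `ℝⁿ = ℝ^{n₁} × ⋯ × ℝ^{n_N}` with the stacked Euclidean norm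
`‖x‖² = Σᵢ ‖xᵢ‖²`. -/
abbrev StackedX (N : ℕ) (nn : Fin N → ℕ) :=
  PiLp 2 (fun i => EuclideanSpace ℝ (Fin (nn i)))

/-- The stacked aggregate space `ℝ^{Nd}` with the stacked Euclidean norm. -/
abbrev StackedY (N d : ℕ) := PiLp 2 (fun _ : Fin N => EuclideanSpace ℝ (Fin d))

/-- The averaging operator `𝒥 z = 1_N ⊗ ((1/N) Σᵢ zᵢ)`. -/
def Jmap {N d : ℕ} (z : StackedY N d) : StackedY N d :=
  WithLp.toLp 2 (fun _ => (N : ℝ)⁻¹ • ∑ j, z j)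

/-- The ℓ₂-operator (spectral) norm of a real matrix. -/
def matrixL2OpNorm {N : ℕ} (M : Matrix (Fin N) (Fin N) ℝ) : ℝ :=
  ‖LinearMap.toContinuousLinearMap (Matrix.toEuclideanLin M)‖

/-- The averaging matrix `J = (1/N) 1_N 1_Nᵀ`. -/
def consensusJ (N : ℕ) : Matrix (Fin N) (Fin N) ℝ := Matrix.of fun _ _ => (N : ℝ)⁻¹

/-- The stacked map `(x,y) ↦ ∇₁f(x,y) + ∇φ(x)(1_N ⊗ (1/N)Σᵢ ∇₂fᵢ(xᵢ,yᵢ))`, where `∇φᵢ(xᵢ)`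
acts as the adjoint (transposed Jacobian) of the derivative of `φᵢ`. -/
def combinedGrad {N d : ℕ} {nn : Fin N → ℕ}
    (φ : ∀ i, EuclideanSpace ℝ (Fin (nn i)) → EuclideanSpace ℝ (Fin d))
    (g1 : ∀ i, EuclideanSpace ℝ (Fin (nn i)) → EuclideanSpace ℝ (Fin d) →
      EuclideanSpace ℝ (Fin (nn i)))
    (g2 : ∀ i, EuclideanSpace ℝ (Fin (nn i)) → EuclideanSpace ℝ (Fin d) →
      EuclideanSpace ℝ (Fin d))
    (x : StackedX N nn) (y : StackedY N d) : StackedX N nn :=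
  WithLp.toLp 2 (fun i => g1 i (x i) (y i) +
    ContinuousLinearMap.adjoint (fderiv ℝ (φ i) (x i)) ((N : ℝ)⁻¹ • ∑ j, g2 j (x j) (y j)))

/-- The stacked map `(x,y) ↦ ∇₂f(x,y) = col(∇₂f₁(x₁,y₁),…,∇₂f_N(x_N,y_N))`. -/
def stackedGrad2 {N d : ℕ} {nn : Fin N → ℕ}
    (g2 : ∀ i, EuclideanSpace ℝ (Fin (nn i)) → EuclideanSpace ℝ (Fin d) →
      EuclideanSpace ℝ (Fin d))
    (x : StackedX N nn) (y : StackedY N d) : StackedY N d :=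
  WithLp.toLp 2 (fun i => g2 i (x i) (y i))

/-!
Write `ỹ = y - 𝒥y` and `σ̃ = σ - 𝒥σ`. Since `A` is column stochastic, `𝒥` absorbs the
mixing step, and since it is row stochastic, `A - J` and `A - I` kill consensus vectors; hence
`ỹ_{k+1} = ((A - J) ⊗ I) ỹ_k + (I - 𝒥) Δ` with `‖Δ‖ ≤ L₂ (‖x_{k+1} - x_k‖ + ‖σ_{k+1} - σ_k‖)`, and
`σ_{k+1} - σ_k = ((A - I) ⊗ I) σ̃_k + φ(x_{k+1}) - φ(x_k)`. By gradient tracking, the `x`-step is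
`-α (G(x_k, σ_k) + ∇φ(x_k) ỹ_k)`, where `G` is the map of Assumption 2. At `(x*, 1 ⊗ σ(x*))` the map
`G` is `∇f(x*) = 0`, so its Lipschitz bound, together with `‖φ(x) - φ(x')‖ ≤ L₃ ‖x - x'‖` and
`𝒥σ_k = 1 ⊗ σ(x_k)`, gives `‖G(x_k, σ_k)‖ ≤ L₁ ((1 + L₃) ‖x_k - x*‖ + ‖σ̃_k‖)`. Chaining these
linear estimates gives the claim.
-/

theorem PiLp.norm_le_mul_norm_of_forall_le {ι : Type*} [Fintype ι] {E F : ι → Type*}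
    [∀ i, SeminormedAddCommGroup (E i)] [∀ i, SeminormedAddCommGroup (F i)]
    {c : ℝ} (hc : 0 ≤ c) {w : PiLp 2 E} {v : PiLp 2 F} (h : ∀ i, ‖w i‖ ≤ c * ‖v i‖) :
    ‖w‖ ≤ c * ‖v‖ := by
  refine le_of_sq_le_sq ?_ (by positivity)
  rw [PiLp.norm_sq_eq_of_L2, mul_pow, PiLp.norm_sq_eq_of_L2, Finset.mul_sum]
  gcongr with i
  simpa [mul_pow] using pow_le_pow_left₀ (norm_nonneg _) (h i) 2

theorem Finset.sum_smul_sub_of_sum_eq_zero {ι E : Type*} [Fintype ι] [AddCommGroup E]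
    [Module ℝ E] {c : ι → ℝ} (hc : ∑ j, c j = 0) (z : ι → E) (m : E) :
    ∑ j, c j • (z j - m) = ∑ j, c j • z j := by
  simp only [smul_sub, Finset.sum_sub_distrib, ← Finset.sum_smul, hc, zero_smul, sub_zero]

/-- `kronMul M z` is `(M ⊗ I) z`. -/
def kronMul {N : ℕ} {E : Type*} [AddCommGroup E] [Module ℝ E]
    (M : Matrix (Fin N) (Fin N) ℝ) (z : PiLp 2 (fun _ : Fin N => E)) :
    PiLp 2 (fun _ : Fin N => E) :=
  WithLp.toLp 2 (fun i => ∑ j, M i j • z j)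

section kronMul

variable {N : ℕ} {κ : Type*} [Fintype κ]

@[simp]
theorem kronMul_apply {E : Type*} [AddCommGroup E] [Module ℝ E]
    (M : Matrix (Fin N) (Fin N) ℝ) (z : PiLp 2 (fun _ : Fin N => E)) (i : Fin N) :
    kronMul M z i = ∑ j, M i j • z j := rfl

theorem PiLp.norm_sq_eq_sum_norm_sq_column (z : PiLp 2 (fun _ : Fin N => EuclideanSpace ℝ κ)) :
    ‖z‖ ^ 2 = ∑ c, ‖(WithLp.toLp 2 (fun j => z j c) : EuclideanSpace ℝ (Fin N))‖ ^ 2 := by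
  simp only [PiLp.norm_sq_eq_of_L2]
  exact Finset.sum_comm

theorem norm_kronMul_le (M : Matrix (Fin N) (Fin N) ℝ)
    (z : PiLp 2 (fun _ : Fin N => EuclideanSpace ℝ κ)) :
    ‖kronMul M z‖ ≤ matrixL2OpNorm M * ‖z‖ := by
  have hcol : ∀ c, (WithLp.toLp 2 (fun i => kronMul M z i c) : EuclideanSpace ℝ (Fin N)) =
      Matrix.toEuclideanLin M (WithLp.toLp 2 (fun j => z j c)) := by
    intro c
    ext i
    simp only [kronMul_apply, WithLp.ofLp_sum, Finset.sum_apply]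
    rfl
  refine le_of_sq_le_sq ?_ (by unfold matrixL2OpNorm; positivity)
  rw [PiLp.norm_sq_eq_sum_norm_sq_column, mul_pow, PiLp.norm_sq_eq_sum_norm_sq_column,
    Finset.mul_sum]
  gcongr with c
  rw [hcol, ← mul_pow]
  exact pow_le_pow_left₀ (norm_nonneg _)
    ((LinearMap.toContinuousLinearMap (Matrix.toEuclideanLin M)).le_opNorm _) 2

end kronMul

section Jmap

variable {N d : ℕ}

@[simp]
theorem Jmap_apply (z : StackedY N d) (i : Fin N) : Jmap z i = (N : ℝ)⁻¹ • ∑ j, z j := rfl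

theorem Jmap_add (z w : StackedY N d) : Jmap (z + w) = Jmap z + Jmap w := by
  ext i : 1
  simp [Finset.sum_add_distrib]

theorem Jmap_sub (z w : StackedY N d) : Jmap (z - w) = Jmap z - Jmap w := by
  ext i : 1
  simp [Finset.sum_sub_distrib, smul_sub]

theorem inner_sub_Jmap_Jmap (hN : 0 < N) (z : StackedY N d) :
    inner ℝ (z - Jmap z) (Jmap z) = 0 := by
  set m : EuclideanSpace ℝ (Fin d) := (N : ℝ)⁻¹ • ∑ j, z j
  have hsum : ∑ j, z j = (N : ℝ) • m := by
    rw [smul_smul, mul_inv_cancel₀ (by exact_mod_cast hN.ne'), one_smul]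
  have hterm : ∀ i, inner ℝ ((z - Jmap z) i) (Jmap z i) = inner ℝ (z i) m - inner ℝ m m :=
    fun i => inner_sub_left _ _ _
  rw [PiLp.inner_apply, Finset.sum_congr rfl fun i _ => hterm i, Finset.sum_sub_distrib,
    ← sum_inner, hsum, real_inner_smul_left, Finset.sum_const, Finset.card_univ,
    Fintype.card_fin, nsmul_eq_mul, sub_self]

theorem norm_sq_eq_norm_sub_Jmap_sq_add (hN : 0 < N) (z : StackedY N d) :
    ‖z‖ ^ 2 = ‖z - Jmap z‖ ^ 2 + ‖Jmap z‖ ^ 2 := by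
  conv_lhs => rw [← sub_add_cancel z (Jmap z)]
  rw [norm_add_sq_real, inner_sub_Jmap_Jmap hN]
  ring

theorem norm_sub_Jmap_le (hN : 0 < N) (z : StackedY N d) : ‖z - Jmap z‖ ≤ ‖z‖ :=
  le_of_sq_le_sq (by nlinarith [norm_sq_eq_norm_sub_Jmap_sq_add hN z]) (norm_nonneg z)

theorem norm_Jmap_le (hN : 0 < N) (z : StackedY N d) : ‖Jmap z‖ ≤ ‖z‖ :=
  le_of_sq_le_sq (by nlinarith [norm_sq_eq_norm_sub_Jmap_sq_add hN z]) (norm_nonneg z)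

end Jmap

section Mixing

variable {N d : ℕ} {A : Matrix (Fin N) (Fin N) ℝ}

theorem kronMul_sub_Jmap_of_sum_row_eq_zero {M : Matrix (Fin N) (Fin N) ℝ}
    (hM : ∀ i, ∑ j, M i j = 0) (z : StackedY N d) :
    kronMul M (z - Jmap z) = kronMul M z := by
  ext i : 1
  exact Finset.sum_smul_sub_of_sum_eq_zero (hM i) _ _

theorem kronMul_sub_consensusJ (M : Matrix (Fin N) (Fin N) ℝ) (z : StackedY N d) :
    kronMul (M - consensusJ N) z = kronMul M z - Jmap z := by
  ext i : 1
  simp [consensusJ, sub_smul, Finset.sum_sub_distrib, Finset.smul_sum]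

theorem kronMul_sub_one (M : Matrix (Fin N) (Fin N) ℝ) (z : StackedY N d) :
    kronMul (M - 1) z = kronMul M z - z := by
  ext i : 1
  simp [sub_smul, Finset.sum_sub_distrib, Matrix.one_apply]

theorem Jmap_kronMul (hcol : ∀ j, ∑ i, A i j = 1) (z : StackedY N d) :
    Jmap (kronMul A z) = Jmap z := by
  ext i : 1
  simp only [Jmap_apply, kronMul_apply]
  rw [Finset.sum_comm]
  simp only [← Finset.sum_smul, hcol, one_smul]

theorem norm_sub_Jmap_kronMul_add_le (hN : 0 < N) (hrow : ∀ i, ∑ j, A i j = 1)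
    (hcol : ∀ j, ∑ i, A i j = 1) (z δ : StackedY N d) :
    ‖kronMul A z + δ - Jmap (kronMul A z + δ)‖ ≤
      matrixL2OpNorm (A - consensusJ N) * ‖z - Jmap z‖ + ‖δ‖ := by
  have hrowJ : ∀ i, ∑ j, (A - consensusJ N) i j = 0 := fun i => by
    simp [consensusJ, Finset.sum_sub_distrib, hrow, hN.ne']
  have hsplit : kronMul A z + δ - Jmap (kronMul A z + δ) =
      kronMul (A - consensusJ N) (z - Jmap z) + (δ - Jmap δ) := by
    rw [kronMul_sub_Jmap_of_sum_row_eq_zero hrowJ, kronMul_sub_consensusJ, Jmap_add,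
      Jmap_kronMul hcol]
    abel
  calc _ ≤ ‖kronMul (A - consensusJ N) (z - Jmap z)‖ + ‖δ - Jmap δ‖ :=
        hsplit ▸ norm_add_le _ _
    _ ≤ _ := add_le_add (norm_kronMul_le _ _) (norm_sub_Jmap_le hN δ)

theorem norm_kronMul_add_sub_le (hrow : ∀ i, ∑ j, A i j = 1) (z δ : StackedY N d) :
    ‖kronMul A z + δ - z‖ ≤ matrixL2OpNorm (A - 1) * ‖z - Jmap z‖ + ‖δ‖ := by
  have hrow1 : ∀ i, ∑ j, (A - 1) i j = 0 := fun i => by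
    simp [Finset.sum_sub_distrib, Matrix.one_apply, hrow]
  have hsplit : kronMul A z + δ - z = kronMul (A - 1) (z - Jmap z) + δ := by
    rw [kronMul_sub_Jmap_of_sum_row_eq_zero hrow1, kronMul_sub_one]
    abel
  calc _ ≤ ‖kronMul (A - 1) (z - Jmap z)‖ + ‖δ‖ := hsplit ▸ norm_add_le _ _
    _ ≤ _ := add_le_add_left (norm_kronMul_le _ _) _

end Mixing

theorem fderiv_uncurry_apply_eq_inner_gradient {E F : Type*} [NormedAddCommGroup E]
    [InnerProductSpace ℝ E] [CompleteSpace E] [NormedAddCommGroup F] [InnerProductSpace ℝ F]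
    [CompleteSpace F] {f : E → F → ℝ} {u : E} {s : F}
    (hf : DifferentiableAt ℝ (fun p : E × F => f p.1 p.2) (u, s)) (a : E) (b : F) :
    fderiv ℝ (fun p : E × F => f p.1 p.2) (u, s) (a, b) =
      inner ℝ (gradient (fun z => f z s) u) a + inner ℝ (gradient (f u) s) b := by
  have hD := hf.hasFDerivAt
  have h₁ : HasFDerivAt (fun z => f z s)
      ((fderiv ℝ (fun p : E × F => f p.1 p.2) (u, s)).comp (.inl ℝ E F)) u :=
    (HasFDerivAt.comp u hD (hasFDerivAt_prodMk_left (𝕜 := ℝ) u s) :)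
  have h₂ : HasFDerivAt (f u)
      ((fderiv ℝ (fun p : E × F => f p.1 p.2) (u, s)).comp (.inr ℝ E F)) s :=
    (HasFDerivAt.comp s hD (hasFDerivAt_prodMk_right (𝕜 := ℝ) u s) :)
  rw [h₁.hasGradientAt.gradient, h₂.hasGradientAt.gradient, InnerProductSpace.toDual_symm_apply,
    InnerProductSpace.toDual_symm_apply, ContinuousLinearMap.comp_apply,
    ContinuousLinearMap.comp_apply, ← map_add]
  simp

theorem PiLp.hasFDerivAt_smul_sum_apply {ι : Type*} [Fintype ι] {E : ι → Type*}
    [∀ i, NormedAddCommGroup (E i)] [∀ i, NormedSpace ℝ (E i)] {G : Type*}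
    [NormedAddCommGroup G] [NormedSpace ℝ G] {φ : ∀ i, E i → G}
    (hφ : ∀ i, Differentiable ℝ (φ i)) (c : ℝ) (x : PiLp 2 E) :
    HasFDerivAt (fun z : PiLp 2 E => c • ∑ j, φ j (z j))
      (c • ∑ j, (fderiv ℝ (φ j) (x j)).comp (PiLp.proj 2 E j)) x :=
  (HasFDerivAt.fun_sum fun j _ =>
    (hφ j (x j)).hasFDerivAt.comp x (PiLp.proj 2 E j).hasFDerivAt).const_smul c

section Gradient

variable {N d : ℕ} {nn : Fin N → ℕ}
  {φ : ∀ i, EuclideanSpace ℝ (Fin (nn i)) → EuclideanSpace ℝ (Fin d)}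

/-- `col(φ₁(x₁), …, φ_N(x_N))`, so that `Jmap (stackedMap φ x) = 1_N ⊗ σ(x)`. -/
def stackedMap (φ : ∀ i, EuclideanSpace ℝ (Fin (nn i)) → EuclideanSpace ℝ (Fin d))
    (x : StackedX N nn) : StackedY N d :=
  WithLp.toLp 2 (fun i => φ i (x i))

@[simp]
theorem stackedMap_apply (x : StackedX N nn) (i : Fin N) : stackedMap φ x i = φ i (x i) := rfl

theorem inner_combinedGrad_const (g1 : ∀ i, EuclideanSpace ℝ (Fin (nn i)) →
      EuclideanSpace ℝ (Fin d) → EuclideanSpace ℝ (Fin (nn i)))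
    (g2 : ∀ i, EuclideanSpace ℝ (Fin (nn i)) → EuclideanSpace ℝ (Fin d) →
      EuclideanSpace ℝ (Fin d))
    (x v : StackedX N nn) (s : EuclideanSpace ℝ (Fin d)) :
    inner ℝ (combinedGrad φ g1 g2 x (WithLp.toLp 2 fun _ => s)) v =
      ∑ i, (inner ℝ (g1 i (x i) s) (v i) +
        inner ℝ (g2 i (x i) s) ((N : ℝ)⁻¹ • ∑ j, fderiv ℝ (φ j) (x j) (v j))) := by
  have hi : ∀ i, inner ℝ (combinedGrad φ g1 g2 x (WithLp.toLp 2 fun _ => s) i) (v i) =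
      inner ℝ (g1 i (x i) s) (v i) +
        inner ℝ ((N : ℝ)⁻¹ • ∑ j, g2 j (x j) s) (fderiv ℝ (φ i) (x i) (v i)) := fun i => by
    rw [← ContinuousLinearMap.adjoint_inner_left, ← inner_add_left]
    rfl
  rw [PiLp.inner_apply, Finset.sum_congr rfl fun i _ => hi i, Finset.sum_add_distrib,
    Finset.sum_add_distrib, ← inner_sum, ← sum_inner, real_inner_smul_left, real_inner_smul_right]

theorem gradient_eq_combinedGrad (hφ : ∀ i, Differentiable ℝ (φ i))
    {f : ∀ i, EuclideanSpace ℝ (Fin (nn i)) → EuclideanSpace ℝ (Fin d) → ℝ}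
    (hf : ∀ i, Differentiable ℝ
      (fun p : EuclideanSpace ℝ (Fin (nn i)) × EuclideanSpace ℝ (Fin d) => f i p.1 p.2))
    {F : StackedX N nn → ℝ}
    (hF : ∀ x : StackedX N nn, F x = ∑ i, f i (x i) ((N : ℝ)⁻¹ • ∑ j, φ j (x j)))
    (x : StackedX N nn) :
    gradient F x = combinedGrad φ (fun i u s => gradient (fun z => f i z s) u)
      (fun i u s => gradient (f i u) s) x (Jmap (stackedMap φ x)) := by
  set s : EuclideanSpace ℝ (Fin d) := (N : ℝ)⁻¹ • ∑ j, φ j (x j)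
  set S := (N : ℝ)⁻¹ • ∑ j, (fderiv ℝ (φ j) (x j)).comp
    (PiLp.proj 2 (fun i => EuclideanSpace ℝ (Fin (nn i))) j)
  set D := fun i => fderiv ℝ
    (fun p : EuclideanSpace ℝ (Fin (nn i)) × EuclideanSpace ℝ (Fin d) => f i p.1 p.2) (x i, s)
  have hterm : ∀ i, HasFDerivAt (fun z : StackedX N nn => f i (z i) ((N : ℝ)⁻¹ • ∑ j, φ j (z j)))
      ((D i).comp ((PiLp.proj 2 _ i).prod S)) x := fun i =>
    (HasFDerivAt.comp x (hf i (x i, s)).hasFDerivAt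
      ((PiLp.proj 2 _ i).hasFDerivAt.prodMk (PiLp.hasFDerivAt_smul_sum_apply hφ _ x)) :)
  have hF' := (HasFDerivAt.fun_sum fun i _ => hterm i).congr_of_eventuallyEq
    (Filter.Eventually.of_forall hF)
  rw [hF'.hasGradientAt.gradient, LinearIsometryEquiv.symm_apply_eq]
  ext v
  rw [InnerProductSpace.toDual_apply_apply, show Jmap (stackedMap φ x) = WithLp.toLp 2 fun _ => s
    from rfl, inner_combinedGrad_const]
  simp only [sum_apply, ContinuousLinearMap.comp_apply,
    ContinuousLinearMap.prod_apply, D, fderiv_uncurry_apply_eq_inner_gradient (hf _ _)]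
  simp [S]

end Gradient

section Step

variable {N d : ℕ} {nn : Fin N → ℕ}
  {φ : ∀ i, EuclideanSpace ℝ (Fin (nn i)) → EuclideanSpace ℝ (Fin d)} {L₃ : ℝ}

theorem norm_stackedMap_sub_le (hφ : ∀ i, Differentiable ℝ (φ i))
    (hbound : ∀ i u, ‖fderiv ℝ (φ i) u‖ ≤ L₃) (hL₃ : 0 ≤ L₃) (x x' : StackedX N nn) :
    ‖stackedMap φ x - stackedMap φ x'‖ ≤ L₃ * ‖x - x'‖ :=
  PiLp.norm_le_mul_norm_of_forall_le hL₃ fun i =>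
    Convex.norm_image_sub_le_of_norm_fderiv_le (fun u _ => hφ i u) (fun u _ => hbound i u)
      convex_univ (Set.mem_univ _) (Set.mem_univ _)

/-- The paper's `∇φ(x) y = col(∇φ₁(x₁) y₁, …, ∇φ_N(x_N) y_N)`. -/
def adjointFDerivMul (φ : ∀ i, EuclideanSpace ℝ (Fin (nn i)) → EuclideanSpace ℝ (Fin d))
    (x : StackedX N nn) (y : StackedY N d) : StackedX N nn :=
  WithLp.toLp 2 (fun i => ContinuousLinearMap.adjoint (fderiv ℝ (φ i) (x i)) (y i))

theorem norm_adjointFDerivMul_le (hbound : ∀ i u, ‖fderiv ℝ (φ i) u‖ ≤ L₃) (hL₃ : 0 ≤ L₃)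
    (x : StackedX N nn) (y : StackedY N d) :
    ‖adjointFDerivMul φ x y‖ ≤ L₃ * ‖y‖ :=
  PiLp.norm_le_mul_norm_of_forall_le hL₃ fun i =>
    ((ContinuousLinearMap.adjoint (fderiv ℝ (φ i) (x i))).le_opNorm (y i)).trans <| by
      rw [LinearIsometryEquiv.norm_map]
      exact mul_le_mul_of_nonneg_right (hbound i (x i)) (norm_nonneg _)

theorem norm_sub_le_of_dgt_step {α : ℝ} (hα : 0 ≤ α)
    (hbound : ∀ i u, ‖fderiv ℝ (φ i) u‖ ≤ L₃) (hL₃ : 0 ≤ L₃)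
    {g1 : ∀ i, EuclideanSpace ℝ (Fin (nn i)) → EuclideanSpace ℝ (Fin d) →
      EuclideanSpace ℝ (Fin (nn i))}
    {g2 : ∀ i, EuclideanSpace ℝ (Fin (nn i)) → EuclideanSpace ℝ (Fin d) →
      EuclideanSpace ℝ (Fin d)}
    {x x' : StackedX N nn} {σ y : StackedY N d}
    (htrack : (N : ℝ)⁻¹ • ∑ i, y i = (N : ℝ)⁻¹ • ∑ i, g2 i (x i) (σ i))
    (hstep : ∀ i, x' i = x i - α • (g1 i (x i) (σ i) +
      ContinuousLinearMap.adjoint (fderiv ℝ (φ i) (x i)) (y i))) :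
    ‖x' - x‖ ≤ α * ‖combinedGrad φ g1 g2 x σ‖ + α * L₃ * ‖y - Jmap y‖ := by
  have hsplit : x' - x = -(α • (combinedGrad φ g1 g2 x σ + adjointFDerivMul φ x (y - Jmap y))) := by
    ext i : 1
    have hi : combinedGrad φ g1 g2 x σ i + adjointFDerivMul φ x (y - Jmap y) i =
        g1 i (x i) (σ i) + ContinuousLinearMap.adjoint (fderiv ℝ (φ i) (x i)) (y i) := by
      change _ + ContinuousLinearMap.adjoint _ ((N : ℝ)⁻¹ • ∑ j, g2 j (x j) (σ j)) +
        ContinuousLinearMap.adjoint _ (y i - (N : ℝ)⁻¹ • ∑ j, y j) = _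
      rw [← htrack, map_sub]
      abel
    rw [PiLp.sub_apply, PiLp.neg_apply, PiLp.smul_apply, PiLp.add_apply, hi, hstep]
    abel
  rw [hsplit, norm_neg, norm_smul, Real.norm_of_nonneg hα, mul_assoc, ← mul_add]
  gcongr
  exact (norm_add_le _ _).trans (by gcongr; exact norm_adjointFDerivMul_le hbound hL₃ _ _)

theorem norm_le_of_lipschitz_of_eq_zero_at_consensus {E : Type*} [SeminormedAddCommGroup E]
    {G : StackedX N nn → StackedY N d → E} {L₁ : ℝ} (hL₁ : 0 ≤ L₁)
    (hG : ∀ x x' y y', ‖G x y - G x' y'‖ ≤ L₁ * (‖x - x'‖ + ‖y - y'‖))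
    (hφlip : ∀ x x', ‖stackedMap φ x - stackedMap φ x'‖ ≤ L₃ * ‖x - x'‖) (hN : 0 < N)
    {xstar : StackedX N nn} (hstar : G xstar (Jmap (stackedMap φ xstar)) = 0)
    {x : StackedX N nn} {σ : StackedY N d} (htrack : Jmap σ = Jmap (stackedMap φ x)) :
    ‖G x σ‖ ≤ L₁ * ((1 + L₃) * ‖x - xstar‖ + ‖σ - Jmap σ‖) := by
  have hσ : ‖σ - Jmap (stackedMap φ xstar)‖ ≤ ‖σ - Jmap σ‖ + L₃ * ‖x - xstar‖ := by
    have hsplit : σ - Jmap (stackedMap φ xstar) =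
        (σ - Jmap σ) + Jmap (stackedMap φ x - stackedMap φ xstar) := by
      rw [Jmap_sub, ← htrack]
      abel
    rw [hsplit]
    exact (norm_add_le _ _).trans (by gcongr; exact (norm_Jmap_le hN _).trans (hφlip x xstar))
  calc ‖G x σ‖ = ‖G x σ - G xstar (Jmap (stackedMap φ xstar))‖ := by rw [hstar, sub_zero]
    _ ≤ L₁ * (‖x - xstar‖ + ‖σ - Jmap (stackedMap φ xstar)‖) := hG _ _ _ _
    _ ≤ L₁ * ((1 + L₃) * ‖x - xstar‖ + ‖σ - Jmap σ‖) :=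
      mul_le_mul_of_nonneg_left (by linarith) hL₁

end Step

theorem dgt_onestep_y_consensus_bound_general (N d : ℕ) (hN : 0 < N) (nn : Fin N → ℕ)
    (φ : ∀ i, EuclideanSpace ℝ (Fin (nn i)) → EuclideanSpace ℝ (Fin d))
    (f : ∀ i, EuclideanSpace ℝ (Fin (nn i)) → EuclideanSpace ℝ (Fin d) → ℝ)
    (hφdiff : ∀ i, Differentiable ℝ (φ i))
    (hfdiff : ∀ i, Differentiable ℝ
      (fun p : EuclideanSpace ℝ (Fin (nn i)) × EuclideanSpace ℝ (Fin d) => f i p.1 p.2))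
    -- the partial gradients ∇₁fᵢ and ∇₂fᵢ
    (g1 : ∀ i, EuclideanSpace ℝ (Fin (nn i)) → EuclideanSpace ℝ (Fin d) →
      EuclideanSpace ℝ (Fin (nn i)))
    (g2 : ∀ i, EuclideanSpace ℝ (Fin (nn i)) → EuclideanSpace ℝ (Fin d) →
      EuclideanSpace ℝ (Fin d))
    (hg1 : ∀ i u s, g1 i u s = gradient (fun z => f i z s) u)
    (hg2 : ∀ i u s, g2 i u s = gradient (f i u) s)
    -- the global objective f(x) = Σᵢ fᵢ(xᵢ, σ(x)) with σ(x) = (1/N)Σᵢ φᵢ(xᵢ)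
    (F : StackedX N nn → ℝ)
    (hF : ∀ x : StackedX N nn, F x = ∑ i, f i (x i) ((N : ℝ)⁻¹ • ∑ j, φ j (x j)))
    -- Assumption 2
    (L₁ L₂ L₃ : ℝ) (hL₁ : 0 < L₁) (hL₂ : 0 < L₂) (hL₃ : 0 < L₃)
    (hGlip : ∀ (x x' : StackedX N nn) (y y' : StackedY N d),
      ‖combinedGrad φ g1 g2 x y - combinedGrad φ g1 g2 x' y'‖ ≤ L₁ * (‖x - x'‖ + ‖y - y'‖))
    (hG2lip : ∀ (x x' : StackedX N nn) (y y' : StackedY N d),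
      ‖stackedGrad2 g2 x y - stackedGrad2 g2 x' y'‖ ≤ L₂ * (‖x - x'‖ + ‖y - y'‖))
    (hφbound : ∀ (i : Fin N) (xi : EuclideanSpace ℝ (Fin (nn i))), ‖fderiv ℝ (φ i) xi‖ ≤ L₃)
    -- the weight matrix
    (A : Matrix (Fin N) (Fin N) ℝ)
    (hrow : ∀ i, ∑ j, A i j = 1) (hcol : ∀ j, ∑ i, A i j = 1)
    -- the minimizer of F
    (xstar : StackedX N nn) (hmin : ∀ z, F xstar ≤ F z)
    -- one DGT step
    (α : ℝ) (hα0 : 0 < α)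
    (xk xk1 : StackedX N nn) (σk σk1 yk yk1 : StackedY N d)
    (htrackσ : (N : ℝ)⁻¹ • ∑ i, σk i = (N : ℝ)⁻¹ • ∑ i, φ i (xk i))
    (htracky : (N : ℝ)⁻¹ • ∑ i, yk i = (N : ℝ)⁻¹ • ∑ i, g2 i (xk i) (σk i))
    (hxup : ∀ i, xk1 i = xk i - α • (g1 i (xk i) (σk i) +
      ContinuousLinearMap.adjoint (fderiv ℝ (φ i) (xk i)) (yk i)))
    (hσup : ∀ i, σk1 i = ∑ j, A i j • σk j + φ i (xk1 i) - φ i (xk i))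
    (hyup : ∀ i, yk1 i = ∑ j, A i j • yk j + g2 i (xk1 i) (σk1 i) - g2 i (xk i) (σk i)) :
    ‖yk1 - Jmap yk1‖ ≤ (matrixL2OpNorm (A - consensusJ N) + α * L₂ * L₃ * (1 + L₃)) * ‖yk - Jmap yk‖ +
      α * L₁ * L₂ * (1 + L₃) ^ 2 * ‖xk - xstar‖ +
      (α * L₁ * L₂ * (1 + L₃) + L₂ * matrixL2OpNorm (A - 1)) * ‖σk - Jmap σk‖ := by
  have hstar : combinedGrad φ g1 g2 xstar (Jmap (stackedMap φ xstar)) = 0 := by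
    obtain rfl : g1 = _ := funext fun i => funext fun u => funext (hg1 i u)
    obtain rfl : g2 = _ := funext fun i => funext fun u => funext (hg2 i u)
    rw [← gradient_eq_combinedGrad hφdiff hfdiff hF, gradient,
      IsLocalMin.fderiv_eq_zero (Filter.Eventually.of_forall hmin), map_zero]
  have hyk1 : yk1 = kronMul A yk + (stackedGrad2 g2 xk1 σk1 - stackedGrad2 g2 xk σk) := by
    ext i : 1; simp [stackedGrad2, hyup, add_sub_assoc]
  have hσk1 : σk1 = kronMul A σk + (stackedMap φ xk1 - stackedMap φ xk) := by
    ext i : 1; simp [hσup, add_sub_assoc]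
  have hy := hyk1 ▸ norm_sub_Jmap_kronMul_add_le hN hrow hcol yk
    (stackedGrad2 g2 xk1 σk1 - stackedGrad2 g2 xk σk)
  have hσ := hσk1 ▸ norm_kronMul_add_sub_le hrow σk (stackedMap φ xk1 - stackedMap φ xk)
  have hΔ := hG2lip xk1 xk σk1 σk
  have hΦ := norm_stackedMap_sub_le hφdiff hφbound hL₃.le xk1 xk
  have hx := norm_sub_le_of_dgt_step hα0.le hφbound hL₃.le htracky hxup
  have hG := norm_le_of_lipschitz_of_eq_zero_at_consensus hL₁.le hGlip
    (norm_stackedMap_sub_le hφdiff hφbound hL₃.le) hN hstar (σ := σk)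
    (by ext i : 1; exact htrackσ)
  have e₁ := mul_le_mul_of_nonneg_left (hσ.trans (add_le_add_right hΦ _)) hL₂.le
  have e₂ := mul_le_mul_of_nonneg_left hx (by positivity : 0 ≤ L₂ * (1 + L₃))
  have e₃ := mul_le_mul_of_nonneg_left hG (by positivity : 0 ≤ α * L₂ * (1 + L₃))
  linarith

/-- Under Assumption 2 and one DGT step with stepsize `α > 0`,
`‖y_{k+1} - 𝒥y_{k+1}‖ ≤ (ρ + αL₂L₃(1+L₃))‖y_k - 𝒥y_k‖ + αL₁L₂(1+L₃)²‖x_k - x*‖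
+ (αL₁L₂(1+L₃) + L₂‖A - I‖)‖σ_k - 𝒥σ_k‖`, with `ρ = ‖A - J‖` and `‖A - I‖` the
ℓ₂-operator norm. -/
theorem dgt_onestep_y_consensus_bound (N d : ℕ) (hN : 0 < N) (nn : Fin N → ℕ)
    (φ : ∀ i, EuclideanSpace ℝ (Fin (nn i)) → EuclideanSpace ℝ (Fin d))
    (f : ∀ i, EuclideanSpace ℝ (Fin (nn i)) → EuclideanSpace ℝ (Fin d) → ℝ)
    (hφdiff : ∀ i, Differentiable ℝ (φ i))
    (hfdiff : ∀ i, Differentiable ℝ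
      (fun p : EuclideanSpace ℝ (Fin (nn i)) × EuclideanSpace ℝ (Fin d) => f i p.1 p.2))
    -- the partial gradients ∇₁fᵢ and ∇₂fᵢ
    (g1 : ∀ i, EuclideanSpace ℝ (Fin (nn i)) → EuclideanSpace ℝ (Fin d) →
      EuclideanSpace ℝ (Fin (nn i)))
    (g2 : ∀ i, EuclideanSpace ℝ (Fin (nn i)) → EuclideanSpace ℝ (Fin d) →
      EuclideanSpace ℝ (Fin d))
    (hg1 : ∀ i u s, g1 i u s = gradient (fun z => f i z s) u)
    (hg2 : ∀ i u s, g2 i u s = gradient (f i u) s)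
    -- the global objective f(x) = Σᵢ fᵢ(xᵢ, σ(x)) with σ(x) = (1/N)Σᵢ φᵢ(xᵢ)
    (F : StackedX N nn → ℝ)
    (hF : ∀ x : StackedX N nn, F x = ∑ i, f i (x i) ((N : ℝ)⁻¹ • ∑ j, φ j (x j)))
    -- Assumption 2
    (μ L₁ L₂ L₃ : ℝ) (hμ : 0 < μ) (hL₁ : 0 < L₁) (hL₂ : 0 < L₂) (hL₃ : 0 < L₃)
    (hFdiff : Differentiable ℝ F)
    (hsc : ∀ x y : StackedX N nn,
      F x ≥ F y + (inner ℝ (gradient F y) (x - y) : ℝ) + μ / 2 * ‖x - y‖ ^ 2)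
    (hsmooth : ∀ x y : StackedX N nn, ‖gradient F x - gradient F y‖ ≤ L₁ * ‖x - y‖)
    (hGlip : ∀ (x x' : StackedX N nn) (y y' : StackedY N d),
      ‖combinedGrad φ g1 g2 x y - combinedGrad φ g1 g2 x' y'‖ ≤ L₁ * (‖x - x'‖ + ‖y - y'‖))
    (hG2lip : ∀ (x x' : StackedX N nn) (y y' : StackedY N d),
      ‖stackedGrad2 g2 x y - stackedGrad2 g2 x' y'‖ ≤ L₂ * (‖x - x'‖ + ‖y - y'‖))
    (hφbound : ∀ (i : Fin N) (xi : EuclideanSpace ℝ (Fin (nn i))), ‖fderiv ℝ (φ i) xi‖ ≤ L₃)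
    -- the weight matrix
    (A : Matrix (Fin N) (Fin N) ℝ)
    (hA0 : ∀ i j, 0 ≤ A i j)
    (hrow : ∀ i, ∑ j, A i j = 1) (hcol : ∀ j, ∑ i, A i j = 1)
    -- the minimizer of F
    (xstar : StackedX N nn) (hmin : ∀ z, F xstar ≤ F z)
    -- one DGT step
    (α : ℝ) (hα0 : 0 < α)
    (xk xk1 : StackedX N nn) (σk σk1 yk yk1 : StackedY N d)
    (htrackσ : (N : ℝ)⁻¹ • ∑ i, σk i = (N : ℝ)⁻¹ • ∑ i, φ i (xk i))
    (htracky : (N : ℝ)⁻¹ • ∑ i, yk i = (N : ℝ)⁻¹ • ∑ i, g2 i (xk i) (σk i))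
    (hxup : ∀ i, xk1 i = xk i - α • (g1 i (xk i) (σk i) +
      ContinuousLinearMap.adjoint (fderiv ℝ (φ i) (xk i)) (yk i)))
    (hσup : ∀ i, σk1 i = ∑ j, A i j • σk j + φ i (xk1 i) - φ i (xk i))
    (hyup : ∀ i, yk1 i = ∑ j, A i j • yk j + g2 i (xk1 i) (σk1 i) - g2 i (xk i) (σk i)) :
    ‖yk1 - Jmap yk1‖ ≤ (matrixL2OpNorm (A - consensusJ N) + α * L₂ * L₃ * (1 + L₃)) * ‖yk - Jmap yk‖ +
      α * L₁ * L₂ * (1 + L₃) ^ 2 * ‖xk - xstar‖ +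
      (α * L₁ * L₂ * (1 + L₃) + L₂ * matrixL2OpNorm (A - 1)) * ‖σk - Jmap σk‖ :=
  dgt_onestep_y_consensus_bound_general N d hN nn φ f hφdiff hfdiff g1 g2 hg1 hg2 F hF L₁ L₂ L₃ hL₁
    hL₂ hL₃ hGlip hG2lip hφbound A hrow hcol xstar hmin α hα0 xk xk1 σk σk1 yk yk1 htrackσ htracky
    hxup hσup hyup
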